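/- arXiv:2201.05741 — 2 statements merged into one kernel-verified Lean document; each statement's English description precedes it below -/
import Mathlib

section
/- Under the sketch-and-project setup, for every realization of the sketching matrices and every k ≥ 0, the transformed error β_k := B^{1/2}(x_k − x*) lies in row(AB^{-1/2}), and β_{k+1} = β_k − Q_{k+1}Q_{k+1}^⊤β_k for any matrix Q_{k+1} whose columns form an orthonormal basis of row(S_{k+1}^⊤AB^{-1/2}). -/
/-!
Write `H = B^{1/2}`, `β_k = H(x_k - x*)` and `W = Sᵀ A H⁻¹`. Substituting `B⁻¹ = H⁻¹H⁻¹` turns the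
sketch-and-project step into `β ↦ β - Wᵀ(WWᵀ)†W β`. The matrix `P = Wᵀ(WWᵀ)†W` is the orthogonal
projector onto `row(W)`: already the Penrose identity `WWᵀ X WWᵀ = WWᵀ` gives `PWᵀ = Wᵀ` and
`WP = W`, because `WWᵀE = 0` forces `WᵀE = 0`. For an orthonormal basis `Q` of `row(W)` these
identities give `P = PQQᵀ = QQᵀ`.

Since `row(W) ⊆ row(AH⁻¹)`, the step preserves membership in `row(AH⁻¹)`. At `k = 0` the membership
is the optimality of `x*`: moving `x*` to `x* + tH⁻¹w` with `w ∈ ker(AH⁻¹)` keeps it a solution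
and cannot decrease the `B`-distance to `x₀`, so `β₀ ⊥ ker(AH⁻¹)`.
-/

open MeasureTheory ProbabilityTheory Matrix Finset Filter

noncomputable section

/-- The Moore–Penrose pseudoinverse of a real matrix, defined via classical choice
as a matrix satisfying the four Penrose equations (such a matrix exists and is unique). -/
noncomputable def mpinv {a b : ℕ} (M : Matrix (Fin a) (Fin b) ℝ) : Matrix (Fin b) (Fin a) ℝ :=
  Classical.epsilon fun X => M * X * M = M ∧ X * M * X = X ∧ (M * X)ᵀ = M * X ∧ (X * M)ᵀ = X * M

/-- The Euclidean norm of a vector in `Fin a → ℝ`. -/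
noncomputable def nrm2 {a : ℕ} (v : Fin a → ℝ) : ℝ := Real.sqrt (∑ i, v i ^ 2)

/-- The spectral norm (ℓ₂ operator norm) of a matrix. -/
noncomputable def specNorm {a b : ℕ} (M : Matrix (Fin a) (Fin b) ℝ) : ℝ :=
  sInf {c | 0 ≤ c ∧ ∀ v, nrm2 (M *ᵥ v) ≤ c * nrm2 v}

/-- The row space of a matrix, as a submodule of `Fin b → ℝ`. -/
def rowSpace {a b : ℕ} (M : Matrix (Fin a) (Fin b) ℝ) : Submodule ℝ (Fin b → ℝ) :=
  Submodule.span ℝ (Set.range M)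

/-- The column space of a matrix, as a submodule of `Fin a → ℝ`. -/
def colSpace {a b : ℕ} (M : Matrix (Fin a) (Fin b) ℝ) : Submodule ℝ (Fin a → ℝ) :=
  rowSpace Mᵀ

/-- One step of the sketch-and-project iteration:
`x ↦ x − B⁻¹Aᵀ Sₖ (Sₖᵀ A B⁻¹ Aᵀ Sₖ)† Sₖᵀ (A x − b)`. -/
noncomputable def spStep {m n p : ℕ} (A : Matrix (Fin m) (Fin n) ℝ)
    (B : Matrix (Fin n) (Fin n) ℝ) (b : Fin m → ℝ)
    (Sk : Matrix (Fin m) (Fin p) ℝ) (xk : Fin n → ℝ) : Fin n → ℝ :=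
  xk - (B⁻¹ * Aᵀ * Sk * mpinv (Skᵀ * A * B⁻¹ * Aᵀ * Sk) * Skᵀ) *ᵥ (A *ᵥ xk - b)

instance matrixMeasurableSpace {a b : ℕ} : MeasurableSpace (Matrix (Fin a) (Fin b) ℝ) :=
  MeasurableSpace.pi

/-- The `(C, ω)` sub-exponential Johnson–Lindenstrauss property of a random `m × p` matrix. -/
def jlProperty {m p : ℕ} {Ω : Type*} [MeasurableSpace Ω] (μ : Measure Ω)
    (S : Ω → Matrix (Fin m) (Fin p) ℝ) (C ω : ℝ) : Prop :=
  0 < C ∧ 0 < ω ∧ ∀ z : Fin m → ℝ,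
    (∀ t : ℝ, |t| ≤ 1 / ω →
      ∫ a, Real.exp (t * (nrm2 ((S a)ᵀ *ᵥ z) ^ 2 - nrm2 z ^ 2)) ∂μ ≤
        Real.exp (t ^ 2 * nrm2 z ^ 4 / (2 * C * p))) ∧
    (∀ δ : ℝ, 0 < δ →
      μ {a | δ * nrm2 z ^ 2 < |nrm2 ((S a)ᵀ *ᵥ z) ^ 2 - nrm2 z ^ 2|} ≤
        ENNReal.ofReal (2 * Real.exp (-min (C * p * δ ^ 2) (C * p * δ / ω))))

/-- `σ`-algebra generated by the sketching matrices `S₁, …, S_j`. -/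
def sigmaF {m p : ℕ} {Ω : Type*} [MeasurableSpace Ω]
    (S : ℕ → Ω → Matrix (Fin m) (Fin p) ℝ) (j : ℕ) : MeasurableSpace Ω :=
  ⨆ i ∈ Finset.Icc 1 j, MeasurableSpace.comap (S i) inferInstance

/-- The smallest nonzero singular value of a matrix. -/
noncomputable def sigmaMinPos {a b : ℕ} (M : Matrix (Fin a) (Fin b) ℝ) : ℝ :=
  sInf {c | ∃ v ∈ rowSpace M, v ≠ 0 ∧ c = nrm2 (M *ᵥ v) / nrm2 v}

theorem exists_penrose_of_transpose_eq {ι : Type*} [Fintype ι] [DecidableEq ι]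
    {M : Matrix ι ι ℝ} (hM : Mᵀ = M) :
    ∃ X, M * X * M = M ∧ X * M * X = X ∧ (M * X)ᵀ = M * X ∧ (X * M)ᵀ = X * M := by
  obtain ⟨U, d, hUU, rfl⟩ : ∃ (U : Matrix ι ι ℝ) (d : ι → ℝ),
      Uᵀ * U = 1 ∧ M = U * diagonal d * Uᵀ := by
    have hH : M.IsHermitian := by
      simpa [IsHermitian, conjTranspose_eq_transpose_of_trivial] using hM
    refine ⟨hH.eigenvectorUnitary, hH.eigenvalues, ?_, ?_⟩
    · simpa [star_eq_conjTranspose] using (mem_unitaryGroup_iff').mp hH.eigenvectorUnitary.2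
    · simpa [star_eq_conjTranspose, conjTranspose_eq_transpose_of_trivial]
        using hH.spectral_theorem
  have conj_mul : ∀ f g : ι → ℝ,
      U * diagonal f * Uᵀ * (U * diagonal g * Uᵀ) = U * diagonal (f * g) * Uᵀ := by
    intro f g
    rw [Matrix.mul_assoc (U * diagonal f), ← Matrix.mul_assoc Uᵀ, ← Matrix.mul_assoc Uᵀ, hUU,
      Matrix.one_mul, ← Matrix.mul_assoc, Matrix.mul_assoc U, diagonal_mul_diagonal]
    rfl
  have conj_transpose : ∀ f : ι → ℝ, (U * diagonal f * Uᵀ)ᵀ = U * diagonal f * Uᵀ := by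
    intro f
    rw [transpose_mul, transpose_mul, transpose_transpose, diagonal_transpose, Matrix.mul_assoc]
  -- invert the eigenvalues, with the junk value `0⁻¹ = 0` on the kernel
  refine ⟨U * diagonal d⁻¹ * Uᵀ, ?_, ?_, ?_, ?_⟩ <;>
    simp only [conj_mul, conj_transpose] <;> congr 3 <;> funext i <;>
    by_cases h : d i = 0 <;> simp [h]

theorem mul_mpinv_mul_of_transpose_eq {a : ℕ} {M : Matrix (Fin a) (Fin a) ℝ} (hM : Mᵀ = M) :
    M * mpinv M * M = M :=
  (Classical.epsilon_spec (exists_penrose_of_transpose_eq hM)).1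

section RowSpace

variable {a b c : ℕ}

theorem rowSpace_eq_range (M : Matrix (Fin a) (Fin b) ℝ) :
    rowSpace M = LinearMap.range Mᵀ.mulVecLin := by
  rw [range_mulVecLin]
  rfl

theorem transpose_mulVec_mem_rowSpace (M : Matrix (Fin a) (Fin b) ℝ) (u : Fin a → ℝ) :
    Mᵀ *ᵥ u ∈ rowSpace M := by
  rw [rowSpace_eq_range]
  exact ⟨u, rfl⟩

theorem rowSpace_mul_le (N : Matrix (Fin c) (Fin a) ℝ) (M : Matrix (Fin a) (Fin b) ℝ) :
    rowSpace (N * M) ≤ rowSpace M := by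
  rw [rowSpace_eq_range, rowSpace_eq_range, transpose_mul, mulVecLin_mul]
  exact LinearMap.range_comp_le_range _ _

theorem exists_eq_mul_of_rowSpace_le {M : Matrix (Fin c) (Fin b) ℝ} {N : Matrix (Fin a) (Fin b) ℝ}
    (h : rowSpace M ≤ rowSpace N) : ∃ C : Matrix (Fin c) (Fin a) ℝ, M = C * N := by
  have hrow : ∀ i, ∃ u, Nᵀ *ᵥ u = M i := fun i =>
    (rowSpace_eq_range N ▸ h (Submodule.subset_span ⟨i, rfl⟩) :)
  choose C hC using hrow
  refine ⟨Matrix.of C, ?_⟩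
  ext i j
  rw [← hC i, mulVec_transpose, vecMul, mul_apply, dotProduct]
  rfl

end RowSpace

def rowSpaceProj {a b : ℕ} (W : Matrix (Fin a) (Fin b) ℝ) : Matrix (Fin b) (Fin b) ℝ :=
  Wᵀ * mpinv (W * Wᵀ) * W

section RowSpaceProj

variable {a b : ℕ} (W : Matrix (Fin a) (Fin b) ℝ)

theorem mul_transpose_mul_mpinv_mul_mul_transpose :
    W * Wᵀ * mpinv (W * Wᵀ) * (W * Wᵀ) = W * Wᵀ :=
  mul_mpinv_mul_of_transpose_eq (by rw [transpose_mul, transpose_transpose])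

theorem rowSpaceProj_mul_transpose : rowSpaceProj W * Wᵀ = Wᵀ := by
  have hX := mul_transpose_mul_mpinv_mul_mul_transpose W
  set X := mpinv (W * Wᵀ)
  have h : W * Wᵀ * (X * (W * Wᵀ) - 1) = 0 := by
    rw [Matrix.mul_sub, Matrix.mul_one, ← Matrix.mul_assoc, hX, sub_self]
  rw [← conjTranspose_eq_transpose_of_trivial, self_mul_conjTranspose_mul_eq_zero,
    conjTranspose_eq_transpose_of_trivial, Matrix.mul_sub, Matrix.mul_one, sub_eq_zero] at h
  rw [rowSpaceProj, Matrix.mul_assoc, Matrix.mul_assoc, h]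

theorem mul_rowSpaceProj : W * rowSpaceProj W = W := by
  have hX := mul_transpose_mul_mpinv_mul_mul_transpose W
  set X := mpinv (W * Wᵀ)
  have h : (W * Wᵀ * X - 1) * (W * Wᵀ) = 0 := by
    rw [Matrix.sub_mul, Matrix.one_mul, hX, sub_self]
  rw [← conjTranspose_eq_transpose_of_trivial, mul_self_mul_conjTranspose_eq_zero,
    Matrix.sub_mul, Matrix.one_mul, sub_eq_zero, conjTranspose_eq_transpose_of_trivial] at h
  rw [rowSpaceProj, ← Matrix.mul_assoc, ← Matrix.mul_assoc, h]

theorem rowSpaceProj_mulVec_mem_rowSpace (v : Fin b → ℝ) : rowSpaceProj W *ᵥ v ∈ rowSpace W := by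
  rw [rowSpaceProj, Matrix.mul_assoc, ← mulVec_mulVec]
  exact transpose_mulVec_mem_rowSpace W _

theorem mem_rowSpace_of_forall_dotProduct_eq_zero {v : Fin b → ℝ}
    (h : ∀ w, W *ᵥ w = 0 → v ⬝ᵥ w = 0) : v ∈ rowSpace W := by
  set e := v - rowSpaceProj W *ᵥ v
  have he : W *ᵥ e = 0 := by
    rw [mulVec_sub, mulVec_mulVec, mul_rowSpaceProj, sub_self]
  have hproj : (rowSpaceProj W *ᵥ v) ⬝ᵥ e = 0 := by
    rw [rowSpaceProj, Matrix.mul_assoc, ← mulVec_mulVec, mulVec_transpose, ← dotProduct_mulVec,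
      he, dotProduct_zero]
  have hee : e ⬝ᵥ e = 0 := by rw [sub_dotProduct, h e he, hproj, sub_zero]
  rw [sub_eq_zero.mp (dotProduct_self_eq_zero.mp hee)]
  exact rowSpaceProj_mulVec_mem_rowSpace W v

theorem rowSpaceProj_eq_mul_transpose {q : ℕ} {Q : Matrix (Fin b) (Fin q) ℝ} (hQ : Qᵀ * Q = 1)
    (hcol : colSpace Q = rowSpace W) : rowSpaceProj W = Q * Qᵀ := by
  obtain ⟨C, hC⟩ := exists_eq_mul_of_rowSpace_le hcol.le
  obtain ⟨D, hD⟩ := exists_eq_mul_of_rowSpace_le hcol.ge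
  have hWQ : W * (Q * Qᵀ) = W := by
    rw [hD, Matrix.mul_assoc, ← Matrix.mul_assoc Qᵀ, hQ, Matrix.one_mul]
  have hQ' : Q = Wᵀ * Cᵀ := by rw [← transpose_mul, ← hC, transpose_transpose]
  have hPQ : rowSpaceProj W * Q = Q := by
    rw [hQ', ← Matrix.mul_assoc, rowSpaceProj_mul_transpose]
  calc rowSpaceProj W = rowSpaceProj W * (Q * Qᵀ) := by
        rw [rowSpaceProj, Matrix.mul_assoc _ W, hWQ]
    _ = Q * Qᵀ := by rw [← Matrix.mul_assoc, hPQ]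

end RowSpaceProj

theorem nrm2_le_nrm2_iff {a : ℕ} {u v : Fin a → ℝ} : nrm2 u ≤ nrm2 v ↔ u ⬝ᵥ u ≤ v ⬝ᵥ v := by
  simp only [nrm2, dotProduct, ← sq]
  exact Real.sqrt_le_sqrt_iff (by positivity)

-- `t ↦ ‖u - t w‖² - ‖u‖²` is a nonnegative quadratic vanishing at `0`, so its slope there is `0`.
theorem dotProduct_eq_zero_of_forall_nrm2_le {a : ℕ} {u w : Fin a → ℝ}
    (h : ∀ t : ℝ, nrm2 u ≤ nrm2 (u - t • w)) : u ⬝ᵥ w = 0 := by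
  have hquad : ∀ t : ℝ, 0 ≤ (w ⬝ᵥ w) * (t * t) + (-2 * (u ⬝ᵥ w)) * t + 0 := by
    intro t
    have ht := nrm2_le_nrm2_iff.mp (h t)
    simp only [sub_dotProduct, dotProduct_sub, smul_dotProduct, dotProduct_smul, smul_eq_mul,
      dotProduct_comm w u] at ht
    linarith
  have hdisc := discrim_le_zero hquad
  rw [discrim] at hdisc
  exact pow_eq_zero_iff two_ne_zero |>.mp (by nlinarith [sq_nonneg (u ⬝ᵥ w)])

section SketchAndProject

variable {m n : ℕ} {A : Matrix (Fin m) (Fin n) ℝ} {H : Matrix (Fin n) (Fin n) ℝ}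

theorem mulVec_sub_mem_rowSpace_mul_inv (hH : IsUnit H.det) {x₀ xstar : Fin n → ℝ}
    (hmin : ∀ y, A *ᵥ y = A *ᵥ xstar → nrm2 (H *ᵥ (x₀ - xstar)) ≤ nrm2 (H *ᵥ (x₀ - y))) :
    H *ᵥ (x₀ - xstar) ∈ rowSpace (A * H⁻¹) := by
  refine mem_rowSpace_of_forall_dotProduct_eq_zero _ fun w hw =>
    dotProduct_eq_zero_of_forall_nrm2_le fun t => ?_
  have hy : A *ᵥ (xstar + t • H⁻¹ *ᵥ w) = A *ᵥ xstar := by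
    rw [mulVec_add, mulVec_smul, mulVec_mulVec, hw, smul_zero, add_zero]
  convert hmin _ hy using 2
  simp only [sub_add_eq_sub_sub, mulVec_sub, mulVec_smul, mulVec_mulVec, mul_nonsing_inv _ hH,
    one_mulVec]

theorem mulVec_spStep_sub {p : ℕ} (hH : IsUnit H.det) (hHT : Hᵀ = H) {b : Fin m → ℝ}
    {xstar : Fin n → ℝ} (hsol : A *ᵥ xstar = b) (S : Matrix (Fin m) (Fin p) ℝ) (x : Fin n → ℝ) :
    H *ᵥ (spStep A (H * H) b S x - xstar) =
      H *ᵥ (x - xstar) - rowSpaceProj (Sᵀ * A * H⁻¹) *ᵥ (H *ᵥ (x - xstar)) := by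
  have hgram : Sᵀ * A * (H * H)⁻¹ * Aᵀ * S = Sᵀ * A * H⁻¹ * (Sᵀ * A * H⁻¹)ᵀ := by
    rw [Matrix.mul_inv_rev, transpose_mul, transpose_mul, transpose_nonsing_inv, hHT,
      transpose_transpose]
    simp only [Matrix.mul_assoc]
  have hres : A *ᵥ x - b = A *ᵥ (x - xstar) := by rw [mulVec_sub, hsol]
  rw [spStep, hgram, hres, sub_right_comm, mulVec_sub, mulVec_mulVec, mulVec_mulVec, mulVec_mulVec]
  congr 2
  rw [rowSpaceProj, transpose_mul, transpose_mul, transpose_nonsing_inv, hHT, Matrix.mul_inv_rev]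
  simp only [transpose_transpose, Matrix.mul_assoc, nonsing_inv_mul _ hH, Matrix.mul_one]
  rw [← Matrix.mul_assoc H, mul_nonsing_inv _ hH, Matrix.one_mul]

end SketchAndProject

theorem stmt2_general {m n p : ℕ} (A : Matrix (Fin m) (Fin n) ℝ) (b : Fin m → ℝ)
    (B Bhalf : Matrix (Fin n) (Fin n) ℝ) (hB : B.PosDef)
    (hBsymm : Bhalfᵀ = Bhalf) (hBsq : Bhalf * Bhalf = B)
    (S : ℕ → Matrix (Fin m) (Fin p) ℝ)
    (x₀ : Fin n → ℝ) (x : ℕ → Fin n → ℝ)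
    (hx0 : x 0 = x₀) (hxrec : ∀ k, x (k + 1) = spStep A B b (S (k + 1)) (x k))
    (xstar : Fin n → ℝ) (hsol : A *ᵥ xstar = b)
    (hproj : ∀ y, A *ᵥ y = b →
      nrm2 (Bhalf *ᵥ (x₀ - xstar)) ≤ nrm2 (Bhalf *ᵥ (x₀ - y))) :
    ∀ k, Bhalf *ᵥ (x k - xstar) ∈ rowSpace (A * Bhalf⁻¹) ∧
      ∀ (q : ℕ) (Q : Matrix (Fin n) (Fin q) ℝ), Qᵀ * Q = 1 →
        colSpace Q = rowSpace ((S (k + 1))ᵀ * A * Bhalf⁻¹) →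
        Bhalf *ᵥ (x (k + 1) - xstar) =
          Bhalf *ᵥ (x k - xstar) - (Q * Qᵀ) *ᵥ (Bhalf *ᵥ (x k - xstar)) := by
  subst hBsq
  have hH : IsUnit Bhalf.det := isUnit_iff_ne_zero.mpr fun h => by
    simpa [det_mul, h] using hB.det_pos
  have hstep : ∀ k, Bhalf *ᵥ (x (k + 1) - xstar) = Bhalf *ᵥ (x k - xstar) -
      rowSpaceProj ((S (k + 1))ᵀ * A * Bhalf⁻¹) *ᵥ (Bhalf *ᵥ (x k - xstar)) := fun k => by
    rw [hxrec, mulVec_spStep_sub hH hBsymm hsol]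
  have hmem : ∀ k, Bhalf *ᵥ (x k - xstar) ∈ rowSpace (A * Bhalf⁻¹) := by
    intro k
    induction k with
    | zero => exact hx0 ▸ mulVec_sub_mem_rowSpace_mul_inv hH fun y hy => hproj y (hy.trans hsol)
    | succ k ih =>
      rw [hstep, Matrix.mul_assoc]
      exact sub_mem ih (rowSpace_mul_le _ _ (rowSpaceProj_mulVec_mem_rowSpace _ _))
  intro k
  refine ⟨hmem k, fun q Q hQ hcol => ?_⟩
  rw [hstep, rowSpaceProj_eq_mul_transpose _ hQ hcol]

/-- For every realization and every `k`, the transformed error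
`β_k := B^{1/2}(x_k − x*)` lies in `row(AB^{-1/2})`, and
`β_{k+1} = β_k − Q_{k+1}Q_{k+1}ᵀ β_k` for any matrix `Q_{k+1}` whose columns form an
orthonormal basis of `row(S_{k+1}ᵀ A B^{-1/2})`. -/
theorem stmt2 {m n p : ℕ} (A : Matrix (Fin m) (Fin n) ℝ) (b : Fin m → ℝ)
    (hconsistent : ∃ y, A *ᵥ y = b)
    (B Bhalf : Matrix (Fin n) (Fin n) ℝ) (hB : B.PosDef)
    (hBsymm : Bhalfᵀ = Bhalf) (hBsq : Bhalf * Bhalf = B)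
    (S : ℕ → Matrix (Fin m) (Fin p) ℝ)
    (x₀ : Fin n → ℝ) (x : ℕ → Fin n → ℝ)
    (hx0 : x 0 = x₀) (hxrec : ∀ k, x (k + 1) = spStep A B b (S (k + 1)) (x k))
    (xstar : Fin n → ℝ) (hsol : A *ᵥ xstar = b)
    (hproj : ∀ y, A *ᵥ y = b →
      nrm2 (Bhalf *ᵥ (x₀ - xstar)) ≤ nrm2 (Bhalf *ᵥ (x₀ - y))) :
    ∀ k, Bhalf *ᵥ (x k - xstar) ∈ rowSpace (A * Bhalf⁻¹) ∧
      ∀ (q : ℕ) (Q : Matrix (Fin n) (Fin q) ℝ), Qᵀ * Q = 1 →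
        colSpace Q = rowSpace ((S (k + 1))ᵀ * A * Bhalf⁻¹) →
        Bhalf *ᵥ (x (k + 1) - xstar) =
          Bhalf *ᵥ (x k - xstar) - (Q * Qᵀ) *ᵥ (Bhalf *ᵥ (x k - xstar)) :=
  stmt2_general A b B Bhalf hB hBsymm hBsq S x₀ x hx0 hxrec xstar hsol hproj

end
end

section
/- Suppose the random m×p matrix S₁ satisfies the (C,ω) sub-exponential JL property and p > (log 2 / C)·max{ω², 1/δ²} for some δ ∈ (0,1). Then for every nonzero z ∈ row(AB^{-1/2}): P(‖S₁^⊤AB^{-1/2}z‖₂² > 0) ≥ 1 − 2exp(−min{Cpδ², Cpδ/ω}) > 0. -/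
open MeasureTheory ProbabilityTheory Matrix Finset Filter

noncomputable section

theorem nrm2_sq {a : ℕ} (v : Fin a → ℝ) : nrm2 v ^ 2 = ∑ i, v i ^ 2 :=
  Real.sq_sqrt (by positivity)

theorem nrm2_sq_pos {a : ℕ} {v : Fin a → ℝ} (hv : v ≠ 0) : 0 < nrm2 v ^ 2 := by
  rw [nrm2_sq]
  obtain ⟨i, hi⟩ := Function.ne_iff.mp hv
  exact Finset.sum_pos' (fun j _ => sq_nonneg _) ⟨i, Finset.mem_univ i, sq_pos_of_ne_zero hi⟩

/-- A nonzero vector of `row M` is orthogonal to `ker M`, so it is not in the kernel. -/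
theorem mulVec_ne_zero_of_mem_rowSpace {a b : ℕ} {M : Matrix (Fin a) (Fin b) ℝ}
    {z : Fin b → ℝ} (hz : z ∈ rowSpace M) (hz0 : z ≠ 0) : M *ᵥ z ≠ 0 := by
  rw [rowSpace, show Set.range M = Set.range M.row from rfl, ← range_vecMulLinear] at hz
  obtain ⟨u, rfl⟩ := hz
  rw [vecMulLinear_apply] at hz0 ⊢
  intro hMz
  apply hz0
  have : u ᵥ* M ⬝ᵥ u ᵥ* M = 0 := by
    rw [← dotProduct_mulVec, hMz, dotProduct_zero]
  exact dotProduct_self_eq_zero.mp this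

/-- For the second exponent, `max (ω²) (1/δ²) ≥ ω/δ`, the geometric mean of the two. -/
theorem lt_min_of_sampleSize {L C ω δ p : ℝ} (hL : 0 ≤ L) (hC : 0 < C) (hω : 0 < ω)
    (hδ : 0 < δ) (hp : L / C * max (ω ^ 2) (1 / δ ^ 2) < p) :
    L < min (C * p * δ ^ 2) (C * p * δ / ω) := by
  set K := max (ω ^ 2) (1 / δ ^ 2)
  have hLK : L * K < C * p := by
    calc L * K = C * (L / C * K) := by field_simp
      _ < C * p := by gcongr
  have hδK : 1 ≤ δ ^ 2 * K := by
    calc 1 = δ ^ 2 * (1 / δ ^ 2) := by field_simp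
      _ ≤ δ ^ 2 * K := by gcongr; exact le_max_right _ _
  have hωK : ω ≤ δ * K := by
    have h2 : ω ^ 2 ≤ (δ * K) ^ 2 := by
      calc ω ^ 2 ≤ 1 * K := by rw [one_mul]; exact le_max_left _ _
        _ ≤ δ ^ 2 * K * K := by gcongr
        _ = (δ * K) ^ 2 := by ring
    exact (sq_le_sq₀ hω.le (by positivity)).mp h2
  refine lt_min ?_ ?_
  · calc L ≤ L * (δ ^ 2 * K) := le_mul_of_one_le_right hL hδK
      _ = L * K * δ ^ 2 := by ring
      _ < C * p * δ ^ 2 := by gcongr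
  · rw [lt_div_iff₀ hω]
    calc L * ω ≤ L * (δ * K) := by gcongr
      _ = L * K * δ := by ring
      _ < C * p * δ := by gcongr

theorem two_mul_exp_neg_lt_one {x : ℝ} (hx : Real.log 2 < x) : 2 * Real.exp (-x) < 1 := by
  have : Real.exp (-x) < Real.exp (-Real.log 2) := Real.exp_lt_exp.mpr (neg_lt_neg hx)
  rw [Real.exp_neg (Real.log 2), Real.exp_log two_pos] at this
  linarith

theorem ofReal_one_sub_le_measure {Ω : Type*} [MeasurableSpace Ω] {μ : Measure Ω}
    [IsProbabilityMeasure μ] {s t : Set Ω} {ε : ℝ} (hε : 0 ≤ ε) (hst : sᶜ ⊆ t)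
    (ht : μ t ≤ ENNReal.ofReal ε) : ENNReal.ofReal (1 - ε) ≤ μ s := by
  have hcover : 1 ≤ μ s + μ t :=
    calc 1 = μ (s ∪ t) := by rw [Set.compl_subset_iff_union.mp hst, measure_univ]
      _ ≤ μ s + μ t := measure_union_le s t
  calc ENNReal.ofReal (1 - ε) = 1 - ENNReal.ofReal ε := by
        rw [ENNReal.ofReal_sub 1 hε, ENNReal.ofReal_one]
    _ ≤ 1 - μ t := tsub_le_tsub_left ht 1
    _ ≤ μ s := tsub_le_iff_right.mpr hcover

/-- Where `‖Sᵀw‖²` vanishes it deviates from `‖w‖² > 0` by the full amount `‖w‖² > δ‖w‖²`,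
so the tail bound of the JL property controls the zero set. -/
theorem jlProperty.ofReal_le_measure_sketch_pos {m p : ℕ} {Ω : Type*} [MeasurableSpace Ω]
    {μ : Measure Ω} [IsProbabilityMeasure μ] {S : Ω → Matrix (Fin m) (Fin p) ℝ} {C ω : ℝ}
    (hJL : jlProperty μ S C ω) {δ : ℝ} (hδ : δ ∈ Set.Ioo (0 : ℝ) 1) {w : Fin m → ℝ}
    (hw : w ≠ 0) :
    ENNReal.ofReal (1 - 2 * Real.exp (-min (C * p * δ ^ 2) (C * p * δ / ω))) ≤
      μ {a | 0 < nrm2 ((S a)ᵀ *ᵥ w) ^ 2} := by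
  refine ofReal_one_sub_le_measure (by positivity) ?_ ((hJL.2.2 w).2 δ hδ.1)
  intro a ha
  simp only [Set.mem_compl_iff, Set.mem_ofPred_eq, not_lt] at ha ⊢
  have hw2 := nrm2_sq_pos hw
  calc δ * nrm2 w ^ 2 < nrm2 w ^ 2 - nrm2 ((S a)ᵀ *ᵥ w) ^ 2 := by nlinarith [hδ.2]
    _ ≤ |nrm2 ((S a)ᵀ *ᵥ w) ^ 2 - nrm2 w ^ 2| := by rw [abs_sub_comm]; exact le_abs_self _

theorem stmt7_general {m n p : ℕ} (A : Matrix (Fin m) (Fin n) ℝ)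
    (Bhalf : Matrix (Fin n) (Fin n) ℝ)
    {Ω : Type*} [MeasurableSpace Ω] (μ : Measure Ω) [IsProbabilityMeasure μ]
    (S₁ : Ω → Matrix (Fin m) (Fin p) ℝ)
    (C ω : ℝ) (hJL : jlProperty μ S₁ C ω)
    (δ : ℝ) (hδ : δ ∈ Set.Ioo (0 : ℝ) 1)
    (hp : (p : ℝ) > Real.log 2 / C * max (ω ^ 2) (1 / δ ^ 2))
    (z : Fin n → ℝ) (hz : z ∈ rowSpace (A * Bhalf⁻¹)) (hz0 : z ≠ 0) :
    ENNReal.ofReal (1 - 2 * Real.exp (-min (C * p * δ ^ 2) (C * p * δ / ω))) ≤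
      μ {a | 0 < nrm2 ((S₁ a)ᵀ *ᵥ ((A * Bhalf⁻¹) *ᵥ z)) ^ 2} ∧
    0 < 1 - 2 * Real.exp (-min (C * p * δ ^ 2) (C * p * δ / ω)) := by
  have hexponent := lt_min_of_sampleSize (Real.log_nonneg one_le_two) hJL.1 hJL.2.1 hδ.1 hp
  refine ⟨hJL.ofReal_le_measure_sketch_pos hδ (mulVec_ne_zero_of_mem_rowSpace hz hz0), ?_⟩
  linarith [two_mul_exp_neg_lt_one hexponent]

/-- If `S₁` satisfies the `(C,ω)` sub-exponential JL property and
`p > (log 2 / C)·max{ω², 1/δ²}` for some `δ ∈ (0,1)`, then for every nonzero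
`z ∈ row(AB^{-1/2})`:
`P(‖S₁ᵀ A B^{-1/2} z‖₂² > 0) ≥ 1 − 2 exp(−min{Cpδ², Cpδ/ω}) > 0`. -/
theorem stmt7 {m n p : ℕ} (A : Matrix (Fin m) (Fin n) ℝ)
    (B Bhalf : Matrix (Fin n) (Fin n) ℝ) (hB : B.PosDef)
    (hBsymm : Bhalfᵀ = Bhalf) (hBsq : Bhalf * Bhalf = B)
    {Ω : Type*} [MeasurableSpace Ω] (μ : Measure Ω) [IsProbabilityMeasure μ]
    (S₁ : Ω → Matrix (Fin m) (Fin p) ℝ) (hSmeas : Measurable S₁)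
    (C ω : ℝ) (hJL : jlProperty μ S₁ C ω)
    (δ : ℝ) (hδ : δ ∈ Set.Ioo (0 : ℝ) 1)
    (hp : (p : ℝ) > Real.log 2 / C * max (ω ^ 2) (1 / δ ^ 2))
    (z : Fin n → ℝ) (hz : z ∈ rowSpace (A * Bhalf⁻¹)) (hz0 : z ≠ 0) :
    ENNReal.ofReal (1 - 2 * Real.exp (-min (C * p * δ ^ 2) (C * p * δ / ω))) ≤
      μ {a | 0 < nrm2 ((S₁ a)ᵀ *ᵥ ((A * Bhalf⁻¹) *ᵥ z)) ^ 2} ∧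
    0 < 1 - 2 * Real.exp (-min (C * p * δ ^ 2) (C * p * δ / ω)) :=
  stmt7_general A Bhalf μ S₁ C ω hJL δ hδ hp z hz hz0

end
end
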